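/- arXiv:2211.04965 — 6 statements merged into one kernel-verified Lean document; each statement's English description precedes it below -/
import Mathlib

section
/- (Parameter shift rule for expectation values with an involutory generator.) Let n ≥ 1, let G and H be n×n complex Hermitian matrices with G² = I (the identity matrix), and let ψ ∈ ℂⁿ. Define f : ℝ → ℝ by f(θ) = Re⟨ψ, exp(i(θ/2)G) · H · exp(−i(θ/2)G) ψ⟩, where exp denotes the matrix exponential and ⟨·,·⟩ the standard Hermitian inner product on ℂⁿ. Then for every θ ∈ ℝ, f is differentiable at θ and f′(θ) = (f(θ + π/2) − f(θ − π/2))/2. -/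
/-! Because `G² = 1`, the exponential series of `(i z) • G` splits into its even part `cos z • 1`
and its odd part `(i sin z) • G`. Conjugating `H` by these and applying the double-angle formulas
makes the expectation curve a first-order trigonometric polynomial `a + b cos θ + c sin θ`, whose
derivative `-b sin θ + c cos θ` is half the difference of its values at `θ ± π/2`. -/

open Real Matrix

/-- The expectation-value curve `θ ↦ Re⟨ψ, exp(i(θ/2)G) H exp(-i(θ/2)G) ψ⟩` obtained by
conjugating the observable `H` with the one-parameter gate generated by `G`. -/
noncomputable def expectationCurve {n : ℕ} (G H : Matrix (Fin n) (Fin n) ℂ)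
    (ψ : Fin n → ℂ) (θ : ℝ) : ℝ :=
  (dotProduct (star ψ)
    ((NormedSpace.exp ((Complex.I * ((θ : ℂ) / 2)) • G) * H *
        NormedSpace.exp ((-Complex.I * ((θ : ℂ) / 2)) • G)) *ᵥ ψ)).re

section InvolutoryExponential

open Complex NormedSpace

variable {𝔸 : Type*} [Ring 𝔸] [Algebra ℂ 𝔸] [TopologicalSpace 𝔸] [IsTopologicalRing 𝔸]
  [ContinuousSMul ℂ 𝔸] [T2Space 𝔸] {G : 𝔸}

theorem exp_I_mul_smul_of_mul_self_eq_one (hG : G * G = 1) (z : ℂ) :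
    exp ((I * z) • G) = cos z • (1 : 𝔸) + (I * sin z) • G := by
  have hpow_even (k : ℕ) : G ^ (2 * k) = 1 := by rw [pow_mul, sq, hG, one_pow]
  rw [exp_eq_tsum ℂ]
  refine HasSum.tsum_eq (HasSum.even_add_odd ?_ ?_)
  · convert (hasSum_cos' z).smul_const (1 : 𝔸) using 2 with k
    rw [smul_pow, hpow_even, smul_smul, mul_comm I z]
    congr 1
    ring
  · convert ((hasSum_sin' z).mul_left I).smul_const G using 2 with k
    rw [smul_pow, pow_succ G, hpow_even, one_mul, smul_smul, mul_comm I z]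
    congr 1
    field_simp

theorem exp_conj_of_mul_self_eq_one (hG : G * G = 1) (H : 𝔸) (θ : ℂ) :
    exp ((I * (θ / 2)) • G) * H * exp ((-I * (θ / 2)) • G)
      = (2⁻¹ : ℂ) • (H + G * H * G) + cos θ • ((2⁻¹ : ℂ) • (H - G * H * G))
        + sin θ • ((I / 2) • (G * H - H * G)) := by
  rw [neg_mul, ← mul_neg, exp_I_mul_smul_of_mul_self_eq_one hG,
    exp_I_mul_smul_of_mul_self_eq_one hG, Complex.cos_neg, Complex.sin_neg]
  have hcos : cos (θ / 2) ^ 2 = 1 / 2 + cos θ / 2 := by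
    rw [Complex.cos_sq, mul_div_cancel₀ θ two_ne_zero]
  have hsin : sin θ = 2 * sin (θ / 2) * cos (θ / 2) := by
    rw [← Complex.sin_two_mul, mul_div_cancel₀ θ two_ne_zero]
  simp only [add_mul, mul_add, smul_mul_assoc, mul_smul_comm, one_mul, mul_one,
    smul_smul, smul_add, smul_sub]
  match_scalars
  · linear_combination hcos
  · linear_combination (-I / 2) * hsin
  · linear_combination (I / 2) * hsin
  · linear_combination (-sin (θ / 2) ^ 2) * I_sq + Complex.sin_sq_add_cos_sq (θ / 2) - hcos

end InvolutoryExponential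

theorem hasDerivAt_parameterShift_of_eq_trig {f : ℝ → ℝ} {a b c : ℝ}
    (hf : ∀ t, f t = a + b * cos t + c * sin t) (θ : ℝ) :
    HasDerivAt f ((f (θ + π / 2) - f (θ - π / 2)) / 2) θ := by
  have hderiv : HasDerivAt (fun t => a + b * cos t + c * sin t) (b * -sin θ + c * cos θ) θ :=
    (((hasDerivAt_cos θ).const_mul b).const_add a).add ((hasDerivAt_sin θ).const_mul c)
  rw [funext hf]
  convert hderiv using 1
  simp only [cos_add_pi_div_two, sin_add_pi_div_two, cos_sub_pi_div_two, sin_sub_pi_div_two]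
  ring

theorem expectationCurve_eq_trig {n : ℕ} {G : Matrix (Fin n) (Fin n) ℂ} (hG : G * G = 1)
    (H : Matrix (Fin n) (Fin n) ℂ) (ψ : Fin n → ℂ) :
    ∃ a b c : ℝ, ∀ θ, expectationCurve G H ψ θ = a + b * cos θ + c * sin θ := by
  refine ⟨(star ψ ⬝ᵥ ((2⁻¹ : ℂ) • (H + G * H * G)) *ᵥ ψ).re,
    (star ψ ⬝ᵥ ((2⁻¹ : ℂ) • (H - G * H * G)) *ᵥ ψ).re,
    (star ψ ⬝ᵥ ((Complex.I / 2) • (G * H - H * G)) *ᵥ ψ).re, fun θ => ?_⟩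
  rw [expectationCurve, exp_conj_of_mul_self_eq_one hG, ← Complex.ofReal_cos,
    ← Complex.ofReal_sin]
  simp only [add_mulVec, smul_mulVec, dotProduct_add, dotProduct_smul, smul_eq_mul,
    Complex.add_re, Complex.re_ofReal_mul]
  ring

theorem parameter_shift_rule_involutory_generator_general
    {n : ℕ} (G H : Matrix (Fin n) (Fin n) ℂ)
    (hG2 : G * G = 1)
    (ψ : Fin n → ℂ) (θ : ℝ) :
    HasDerivAt (expectationCurve G H ψ)
      ((expectationCurve G H ψ (θ + π / 2) - expectationCurve G H ψ (θ - π / 2)) / 2)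
      θ := by
  obtain ⟨a, b, c, hf⟩ := expectationCurve_eq_trig hG2 H ψ
  exact hasDerivAt_parameterShift_of_eq_trig hf θ

/-- **Parameter shift rule for expectation values with an involutory generator.**
If `G, H` are Hermitian and `G² = 1`, then
`f θ = Re⟨ψ, exp(i(θ/2)G) H exp(-i(θ/2)G) ψ⟩` is differentiable with
`f' θ = (f (θ + π/2) - f (θ - π/2)) / 2`. -/
theorem parameter_shift_rule_involutory_generator
    {n : ℕ} (hn : 1 ≤ n) (G H : Matrix (Fin n) (Fin n) ℂ)
    (hG : G.IsHermitian) (hH : H.IsHermitian) (hG2 : G * G = 1)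
    (ψ : Fin n → ℂ) (θ : ℝ) :
    HasDerivAt (expectationCurve G H ψ)
      ((expectationCurve G H ψ (θ + π / 2) - expectationCurve G H ψ (θ - π / 2)) / 2)
      θ :=
  parameter_shift_rule_involutory_generator_general G H hG2 ψ θ
end

section
/- (Proposition 2: U-statistic estimator of a power of an expectation value is unbiased.) Let z ≥ 1 be an integer. Let (r_k)_{k≥1} be a sequence of i.i.d. bounded real random variables with mean μ, and let s be an ℕ-valued random variable independent of the sequence (r_k), with s ≥ z almost surely and with E[C(s,z)] finite and strictly positive, where C(s,z) is the binomial coefficient. Define ξ̂ = (1/E[C(s,z)]) · Σ_{1 ≤ α₁ < α₂ < … < α_z ≤ s} r_{α₁}·r_{α₂}·⋯·r_{α_z}, the sum running over all strictly increasing z-tuples of indices between 1 and s. Then E[ξ̂] = μ^z. -/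
open MeasureTheory ProbabilityTheory Finset

/-! By independence of `s` from the sequence, the expectation of the U-statistic is obtained by
first fixing `s = n` and integrating over the sequence, then integrating over `n`. For fixed `n`
the sum has `C(n, z)` terms, each a product of `z` distinct independent factors of mean `μ`,
hence of mean `μ ^ z`; so the expectation is `E[C(s, z)] μ ^ z`, and the normalisation cancels
`E[C(s, z)]`. -/

lemma abs_prod_le_pow_card {ι : Type*} {A : Finset ι} {x : ι → ℝ} {C : ℝ}
    (hx : ∀ k ∈ A, |x k| ≤ C) : |∏ k ∈ A, x k| ≤ C ^ A.card := by
  rw [abs_prod, ← prod_const]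
  exact prod_le_prod (fun _ _ => abs_nonneg _) hx

lemma abs_sum_powersetCard_prod_le {ι : Type*} (S : Finset ι) (z : ℕ) {x : ι → ℝ} {C : ℝ}
    (hx : ∀ k ∈ S, |x k| ≤ C) :
    |∑ A ∈ S.powersetCard z, ∏ k ∈ A, x k| ≤ S.card.choose z * C ^ z := by
  have hterm : ∀ A ∈ S.powersetCard z, |∏ k ∈ A, x k| ≤ C ^ z := by
    intro A hA
    obtain ⟨hAS, rfl⟩ := mem_powersetCard.mp hA
    exact abs_prod_le_pow_card fun k hk => hx k (hAS hk)
  calc |∑ A ∈ S.powersetCard z, ∏ k ∈ A, x k|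
      ≤ ∑ A ∈ S.powersetCard z, |∏ k ∈ A, x k| := abs_sum_le_sum_abs _ _
    _ ≤ S.card.choose z * C ^ z := by
      simpa only [card_powersetCard, nsmul_eq_mul] using sum_le_card_nsmul _ _ _ hterm

/-- The elementary symmetric polynomial `e_z(x 0, …, x (n - 1))`: the unnormalised U-statistic,
with the paper's indices `1, …, s` shifted to `0, …, s - 1`. -/
def prefixEsymm (z n : ℕ) (x : ℕ → ℝ) : ℝ :=
  ∑ A ∈ (range n).powersetCard z, ∏ k ∈ A, x k

lemma measurable_prefixEsymm (z : ℕ) :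
    Measurable fun p : ℕ × (ℕ → ℝ) => prefixEsymm z p.1 p.2 :=
  measurable_from_prod_countable_right fun n =>
    Finset.measurable_sum ((range n).powersetCard z) fun A _ =>
      Finset.measurable_prod A fun k _ => measurable_pi_apply k

section

variable {Ω : Type*} [MeasurableSpace Ω] {P : Measure Ω}

lemma ProbabilityTheory.iIndepFun.integral_finset_prod {ι : Type*} {r : ι → Ω → ℝ}
    (hind : iIndepFun r P) (hmeas : ∀ k, AEStronglyMeasurable (r k) P) (A : Finset ι) :
    ∫ ω, ∏ k ∈ A, r k ω ∂P = ∏ k ∈ A, ∫ ω, r k ω ∂P := by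
  have := (hind.precomp Subtype.val_injective).integral_fun_prod_eq_prod_integral
    (X := fun k : A => r k) fun k => hmeas k
  simp only [univ_eq_attach, prod_attach A fun k => ∫ ω, r k ω ∂P] at this
  simpa only [fun ω => prod_attach A fun k => r k ω] using this

lemma ProbabilityTheory.IndepFun.integral_comp_prodMk {α β E : Type*} [MeasurableSpace α]
    [MeasurableSpace β] [NormedAddCommGroup E] [NormedSpace ℝ E] [IsFiniteMeasure P]
    {X : Ω → α} {Y : Ω → β} (hXY : IndepFun X Y P) (hX : Measurable X) (hY : Measurable Y)
    {g : α × β → E} (hg : StronglyMeasurable g) (hint : Integrable (fun ω => g (X ω, Y ω)) P) :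
    ∫ ω, g (X ω, Y ω) ∂P = ∫ x, ∫ ω, g (x, Y ω) ∂P ∂(P.map X) := by
  have hmap : P.map (fun ω => (X ω, Y ω)) = (P.map X).prod (P.map Y) :=
    (indepFun_iff_map_prod_eq_prod_map_map hX.aemeasurable hY.aemeasurable).mp hXY
  replace hint : Integrable g ((P.map X).prod (P.map Y)) := hmap ▸
    (integrable_map_measure hg.aestronglyMeasurable (hX.prodMk hY).aemeasurable).mpr hint
  rw [← integral_map (hX.prodMk hY).aemeasurable hg.aestronglyMeasurable, hmap,
    integral_prod g hint]
  refine integral_congr_ae (.of_forall fun x => ?_)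
  exact integral_map hY.aemeasurable
    (hg.comp_measurable measurable_prodMk_left).aestronglyMeasurable

lemma integral_sum_powersetCard_prod {ι : Type*} {r : ι → Ω → ℝ} {μ C : ℝ}
    (hind : iIndepFun r P) (hmeas : ∀ k, Measurable (r k)) (hbdd : ∀ k ω, |r k ω| ≤ C)
    (hmean : ∀ k, ∫ ω, r k ω ∂P = μ) (S : Finset ι) (z : ℕ) :
    ∫ ω, ∑ A ∈ S.powersetCard z, ∏ k ∈ A, r k ω ∂P = S.card.choose z * μ ^ z := by
  have := hind.isProbabilityMeasure
  have hint (A : Finset ι) : Integrable (fun ω => ∏ k ∈ A, r k ω) P :=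
    .of_bound (by fun_prop) (C ^ A.card)
      (.of_forall fun ω => abs_prod_le_pow_card fun k _ => hbdd k ω)
  rw [integral_finsetSum _ fun A _ => hint A]
  calc ∑ A ∈ S.powersetCard z, ∫ ω, ∏ k ∈ A, r k ω ∂P
      = ∑ A ∈ S.powersetCard z, μ ^ z := sum_congr rfl fun A hA => by
        rw [hind.integral_finset_prod (fun k => (hmeas k).aestronglyMeasurable),
          prod_congr rfl fun k _ => hmean k, prod_const, (mem_powersetCard.mp hA).2]
    _ = S.card.choose z * μ ^ z := by rw [sum_const, card_powersetCard, nsmul_eq_mul]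

lemma integral_prefixEsymm_of_indepFun {r : ℕ → Ω → ℝ} {s : Ω → ℕ} {μ C : ℝ} (z : ℕ)
    (hind : iIndepFun r P) (hmeas : ∀ k, Measurable (r k)) (hbdd : ∀ k ω, |r k ω| ≤ C)
    (hmean : ∀ k, ∫ ω, r k ω ∂P = μ) (hsmeas : Measurable s)
    (hsindep : IndepFun s (fun ω k => r k ω) P)
    (hCint : Integrable (fun ω => ((s ω).choose z : ℝ)) P) :
    ∫ ω, prefixEsymm z (s ω) (fun k => r k ω) ∂P = (∫ ω, ((s ω).choose z : ℝ) ∂P) * μ ^ z := by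
  have := hind.isProbabilityMeasure
  have hR : Measurable fun ω k => r k ω := measurable_pi_lambda _ hmeas
  have hint : Integrable (fun ω => prefixEsymm z (s ω) (fun k => r k ω)) P :=
    (hCint.mul_const (C ^ z)).mono'
      ((measurable_prefixEsymm z).comp (hsmeas.prodMk hR)).aestronglyMeasurable
      (.of_forall fun ω => by
        simpa only [prefixEsymm, Real.norm_eq_abs, card_range] using
          abs_sum_powersetCard_prod_le (range (s ω)) z fun k _ => hbdd k ω)
  rw [hsindep.integral_comp_prodMk hsmeas hR (measurable_prefixEsymm z).stronglyMeasurable hint]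
  simp only [prefixEsymm, integral_sum_powersetCard_prod hind hmeas hbdd hmean, card_range]
  rw [integral_mul_const, integral_map hsmeas.aemeasurable measurable_from_nat.aestronglyMeasurable]

end

theorem ustatistic_power_unbiased_general
    {Ω : Type*} [MeasurableSpace Ω] (P : Measure Ω)
    (z : ℕ) (μ : ℝ) (r : ℕ → Ω → ℝ) (s : Ω → ℕ)
    (hrmeas : ∀ k, Measurable (r k))
    (hrbdd : ∃ C, ∀ k ω, |r k ω| ≤ C)
    (hrindep : iIndepFun r P)
    (hrmean : ∀ k, ∫ ω, r k ω ∂P = μ)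
    (hsmeas : Measurable s)
    (hsindep : IndepFun s (fun ω => fun k => r k ω) P)
    (hCint : Integrable (fun ω => ((s ω).choose z : ℝ)) P)
    (hCpos : 0 < ∫ ω, ((s ω).choose z : ℝ) ∂P) :
    ∫ ω, (∫ ω', ((s ω').choose z : ℝ) ∂P)⁻¹ *
        ∑ A ∈ (Finset.range (s ω)).powersetCard z, ∏ k ∈ A, r k ω ∂P = μ ^ z := by
  obtain ⟨C, hC⟩ := hrbdd
  have hsum := integral_prefixEsymm_of_indepFun z hrindep hrmeas hC hrmean hsmeas hsindep hCint
  simp only [prefixEsymm] at hsum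
  rw [integral_const_mul, hsum, inv_mul_cancel_left₀ hCpos.ne']

/-- **Proposition 2: the degree-`z` U-statistic with product kernel is an unbiased estimator
of `μ^z`.** Here `(r k)` is an i.i.d. sequence of bounded real random variables with mean `μ`,
and `s` is an `ℕ`-valued shot count independent of the sequence, with `s ≥ z` almost surely and
`E[C(s,z)]` finite and positive. The estimator is
`ξ̂ = (1/E[C(s,z)]) ∑_{1 ≤ α₁ < … < α_z ≤ s} r α₁ ⋯ r α_z`, the sum over all
strictly increasing `z`-tuples being realized as a sum over `z`-element subsets. -/
theorem ustatistic_power_unbiased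
    {Ω : Type*} [MeasurableSpace Ω] (P : Measure Ω) [IsProbabilityMeasure P]
    (z : ℕ) (hz : 1 ≤ z) (μ : ℝ) (r : ℕ → Ω → ℝ) (s : Ω → ℕ)
    (hrmeas : ∀ k, Measurable (r k))
    (hrbdd : ∃ C, ∀ k ω, |r k ω| ≤ C)
    (hrindep : iIndepFun r P)
    (hrident : ∀ k, IdentDistrib (r k) (r 0) P P)
    (hrmean : ∀ k, ∫ ω, r k ω ∂P = μ)
    (hsmeas : Measurable s)
    (hsindep : IndepFun s (fun ω => fun k => r k ω) P)
    (hsge : ∀ᵐ ω ∂P, z ≤ s ω)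
    (hCint : Integrable (fun ω => ((s ω).choose z : ℝ)) P)
    (hCpos : 0 < ∫ ω, ((s ω).choose z : ℝ) ∂P) :
    ∫ ω, (∫ ω', ((s ω').choose z : ℝ) ∂P)⁻¹ *
        ∑ A ∈ (Finset.range (s ω)).powersetCard z, ∏ k ∈ A, r k ω ∂P = μ ^ z :=
  ustatistic_power_unbiased_general P z μ r s hrmeas hrbdd hrindep hrmean hsmeas hsindep hCint hCpos
end

section
/- (Proposition 6, Appendix E: unbiased estimator for the simplified mean-squared-error loss.) Let I be a finite index set. For each i ∈ I let p_i ∈ ℝ be a weight, y_i ∈ ℝ a label, and μ_i ∈ ℝ a target expectation value. For each i ∈ I let (r_{i,k})_{k≥1} be a sequence of i.i.d. bounded real random variables with mean μ_i, the sequences for distinct i being mutually independent. Let (s_i)_{i∈I} be a family of ℕ-valued random variables, jointly independent of all outcome sequences, with E[s_i] > 0 and 0 < E[s_i(s_i − 1)] < ∞ for all i. Define Ê_i = (1/E[s_i]) Σ_{k=1}^{s_i} r_{i,k} and Q̂_i = (1/E[s_i(s_i−1)]) Σ_{1≤k,k'≤s_i, k≠k'} r_{i,k} r_{i,k'}, and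 the estimator L̂ = Σ_{i∈I} p_i (y_i² − 2 y_i Ê_i + Q̂_i). Then E[L̂] = Σ_{i∈I} p_i (y_i − μ_i)². -/
/-!
Since the shot count `s i` is independent of the outcomes, on the event `{s i = n}` the random
sums become the fixed sums `∑_{k<n} r i k` and `∑_{k≠k'<n} r i k * r i k'`, whose means are
`n μ_i` and `n(n-1) μ_i²` (the latter by independence of distinct shots). Summing over `n`
gives `E[∑_{k<s i} r i k] = μ_i E[s i]` and `E[∑_{k≠k'<s i} r i k r i k'] = μ_i² E[s i (s i - 1)]`,
so `Ê i` and `Q̂ i` are unbiased for `μ_i` and `μ_i²`, and the loss estimator is unbiased by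
linearity. Boundedness of the outcomes dominates the sums by `C n` and `C² n(n-1)`, which
makes the sum over `n` commute with the integral.
-/

open MeasureTheory ProbabilityTheory Finset

section RandomIndex

variable {Ω β ι : Type*} [MeasurableSpace Ω] {P : Measure Ω} [MeasurableSpace β]
  [Countable ι] [MeasurableSpace ι] [MeasurableSingletonClass ι]

lemma integral_eq_tsum_setIntegral_preimage_singleton {N : Ω → ι} (hN : Measurable N)
    {f : Ω → ℝ} (hf : Integrable f P) :
    ∫ ω, f ω ∂P = ∑' n, ∫ ω in N ⁻¹' {n}, f ω ∂P := by
  have hcover : (⋃ n, N ⁻¹' {n}) = Set.univ := by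
    rw [← Set.preimage_iUnion, Set.iUnion_of_singleton, Set.preimage_univ]
  rw [← integral_iUnion (fun n => hN (measurableSet_singleton n))
      (fun n n' hne => (Set.disjoint_singleton.2 hne).preimage N)
      (by rwa [hcover, integrableOn_univ]),
    hcover, setIntegral_univ]

lemma integrable_comp_index {N : Ω → ι} (hN : Measurable N) {X : Ω → β} (hX : Measurable X)
    {ψ : ι → β → ℝ} (hψ : ∀ n, Measurable (ψ n)) {φ : ι → ℝ}
    (hφ : Integrable (fun ω => φ (N ω)) P) {C : ℝ} (hbdd : ∀ n ω, |ψ n (X ω)| ≤ C * φ n) :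
    Integrable (fun ω => ψ (N ω) (X ω)) P := by
  have hmeas : Measurable (fun q : β × ι => ψ q.2 q.1) :=
    measurable_from_prod_countable_left fun n => hψ n
  refine (hφ.const_mul C).mono' (hmeas.comp (hX.prodMk hN)).aestronglyMeasurable ?_
  exact Filter.Eventually.of_forall fun ω => hbdd (N ω) ω

/-- Wald-type identity: on `{N = n}` independence factors the integral as
`P(N = n) * m * φ n`, and the level sets of `N` partition `Ω`. -/
lemma ProbabilityTheory.IndepFun.integral_comp_index [IsFiniteMeasure P] {N : Ω → ι}
    (hN : Measurable N) {X : Ω → β} (hX : Measurable X) (hNX : IndepFun N X P)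
    {ψ : ι → β → ℝ} (hψ : ∀ n, Measurable (ψ n)) {φ : ι → ℝ}
    (hφ : Integrable (fun ω => φ (N ω)) P) {C : ℝ} (hbdd : ∀ n ω, |ψ n (X ω)| ≤ C * φ n)
    {m : ℝ} (hmean : ∀ n, ∫ ω, ψ n (X ω) ∂P = m * φ n) :
    ∫ ω, ψ (N ω) (X ω) ∂P = m * ∫ ω, φ (N ω) ∂P := by
  have hlevel (g : ι → Ω → ℝ) (n : ι) :
      ∫ ω in N ⁻¹' {n}, g (N ω) ω ∂P = ∫ ω in N ⁻¹' {n}, g n ω ∂P :=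
    setIntegral_congr_fun (hN (measurableSet_singleton n)) fun ω hω => by rw [hω]
  have hψlevel (n : ι) : ∫ ω in N ⁻¹' {n}, ψ n (X ω) ∂P = P.real (N ⁻¹' {n}) * (m * φ n) := by
    rw [← hmean n]
    exact Indep.setIntegral_eq_mul hN.comap_le hNX hX.aemeasurable
      ⟨{n}, measurableSet_singleton n, rfl⟩ (hψ n).aestronglyMeasurable
  rw [integral_eq_tsum_setIntegral_preimage_singleton hN (integrable_comp_index hN hX hψ hφ hbdd),
    integral_eq_tsum_setIntegral_preimage_singleton hN hφ, ← tsum_mul_left]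
  refine tsum_congr fun n => ?_
  rw [hlevel (fun n ω => ψ n (X ω)), hψlevel, hlevel (fun n _ => φ n), setIntegral_const,
    smul_eq_mul]
  ring

end RandomIndex

lemma sum_range_sum_erase_const {M : Type*} [AddCommMonoid M] (n : ℕ) (c : M) :
    ∑ k ∈ range n, ∑ _k' ∈ (range n).erase k, c = (n * (n - 1)) • c := by
  rw [sum_congr rfl fun k hk => by rw [sum_const, card_erase_of_mem hk, card_range],
    sum_const, card_range, smul_smul]

lemma abs_sum_range_le {x : ℕ → ℝ} {C : ℝ} (hx : ∀ k, |x k| ≤ C) (n : ℕ) :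
    |∑ k ∈ range n, x k| ≤ C * n := by
  calc |∑ k ∈ range n, x k| ≤ ∑ k ∈ range n, |x k| := abs_sum_le_sum_abs _ _
    _ ≤ ∑ _k ∈ range n, C := sum_le_sum fun k _ => hx k
    _ = C * n := by rw [sum_const, card_range, nsmul_eq_mul, mul_comm]

lemma abs_sum_range_sum_erase_mul_le {x : ℕ → ℝ} {C : ℝ} (hx : ∀ k, |x k| ≤ C) (n : ℕ) :
    |∑ k ∈ range n, ∑ k' ∈ (range n).erase k, x k * x k'| ≤ C ^ 2 * (n * (n - 1) : ℕ) := by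
  have hC : 0 ≤ C := (abs_nonneg _).trans (hx 0)
  calc |∑ k ∈ range n, ∑ k' ∈ (range n).erase k, x k * x k'|
      ≤ ∑ k ∈ range n, ∑ k' ∈ (range n).erase k, |x k * x k'| :=
        (abs_sum_le_sum_abs _ _).trans (sum_le_sum fun k _ => abs_sum_le_sum_abs _ _)
    _ ≤ ∑ k ∈ range n, ∑ _k' ∈ (range n).erase k, C ^ 2 := by
        gcongr with k _ k' _
        rw [abs_mul, sq]
        exact mul_le_mul (hx k) (hx k') (abs_nonneg _) hC
    _ = C ^ 2 * (n * (n - 1) : ℕ) := by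
        rw [sum_range_sum_erase_const, nsmul_eq_mul, mul_comm]

section Sequence

variable {Ω : Type*} [MeasurableSpace Ω] {P : Measure Ω} {r : ℕ → Ω → ℝ} {m : ℝ}

lemma integral_sum_range (hint : ∀ k, Integrable (r k) P) (hmean : ∀ k, ∫ ω, r k ω ∂P = m)
    (n : ℕ) : ∫ ω, ∑ k ∈ range n, r k ω ∂P = m * n := by
  rw [integral_finsetSum _ fun k _ => hint k, sum_congr rfl fun k _ => hmean k, sum_const,
    card_range, nsmul_eq_mul, mul_comm]

lemma integral_sum_range_sum_erase_mul (hint : ∀ k, Integrable (r k) P)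
    (hindep : Pairwise fun k k' => IndepFun (r k) (r k') P) (hmean : ∀ k, ∫ ω, r k ω ∂P = m)
    (n : ℕ) :
    ∫ ω, ∑ k ∈ range n, ∑ k' ∈ (range n).erase k, r k ω * r k' ω ∂P
      = m ^ 2 * (n * (n - 1) : ℕ) := by
  have hpair {k k' : ℕ} (hne : k' ≠ k) : ∫ ω, r k ω * r k' ω ∂P = m ^ 2 := by
    rw [(hindep hne.symm).integral_fun_mul_eq_mul_integral (hint k).aestronglyMeasurable
      (hint k').aestronglyMeasurable, hmean, hmean, sq]
  have hpairInt {k k' : ℕ} (hne : k' ≠ k) : Integrable (fun ω => r k ω * r k' ω) P :=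
    (hindep hne.symm).integrable_mul (hint k) (hint k')
  calc ∫ ω, ∑ k ∈ range n, ∑ k' ∈ (range n).erase k, r k ω * r k' ω ∂P
      = ∑ k ∈ range n, ∑ _k' ∈ (range n).erase k, m ^ 2 := by
        rw [integral_finsetSum _ fun k _ => integrable_finsetSum _ fun k' hk' =>
          hpairInt (ne_of_mem_erase hk')]
        refine sum_congr rfl fun k _ => ?_
        rw [integral_finsetSum _ fun k' hk' => hpairInt (ne_of_mem_erase hk')]
        exact sum_congr rfl fun k' hk' => hpair (ne_of_mem_erase hk')
    _ = m ^ 2 * (n * (n - 1) : ℕ) := by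
        rw [sum_range_sum_erase_const, nsmul_eq_mul, mul_comm]

end Sequence

section RandomSum

variable {Ω : Type*} [MeasurableSpace Ω] {P : Measure Ω} {r : ℕ → Ω → ℝ} {N : Ω → ℕ} {C m : ℝ}

lemma integrable_sum_range_index (hN : Measurable N) (hr : ∀ k, Measurable (r k))
    (hC : ∀ k ω, |r k ω| ≤ C) (hNint : Integrable (fun ω => (N ω : ℝ)) P) :
    Integrable (fun ω => ∑ k ∈ range (N ω), r k ω) P :=
  integrable_comp_index (ψ := fun n x => ∑ k ∈ range n, x k) hN (measurable_pi_lambda _ hr)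
    (fun _ => by fun_prop) hNint fun n ω => abs_sum_range_le (hC · ω) n

lemma integral_sum_range_index [IsFiniteMeasure P] (hN : Measurable N)
    (hr : ∀ k, Measurable (r k)) (hNr : IndepFun N (fun ω k => r k ω) P)
    (hC : ∀ k ω, |r k ω| ≤ C) (hmean : ∀ k, ∫ ω, r k ω ∂P = m)
    (hNint : Integrable (fun ω => (N ω : ℝ)) P) :
    ∫ ω, ∑ k ∈ range (N ω), r k ω ∂P = m * ∫ ω, (N ω : ℝ) ∂P :=
  hNr.integral_comp_index (ψ := fun n x => ∑ k ∈ range n, x k) hN (measurable_pi_lambda _ hr)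
    (fun _ => by fun_prop) hNint (fun n ω => abs_sum_range_le (hC · ω) n)
    (integral_sum_range (fun k => .of_bound (hr k).aestronglyMeasurable C (.of_forall (hC k)))
      hmean)

lemma integrable_sum_range_sum_erase_mul_index (hN : Measurable N) (hr : ∀ k, Measurable (r k))
    (hC : ∀ k ω, |r k ω| ≤ C) (hNint : Integrable (fun ω => ((N ω * (N ω - 1) : ℕ) : ℝ)) P) :
    Integrable (fun ω => ∑ k ∈ range (N ω), ∑ k' ∈ (range (N ω)).erase k, r k ω * r k' ω) P :=
  integrable_comp_index (ψ := fun n x => ∑ k ∈ range n, ∑ k' ∈ (range n).erase k, x k * x k')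
    (φ := fun n => ((n * (n - 1) : ℕ) : ℝ)) hN (measurable_pi_lambda _ hr)
    (fun _ => by fun_prop) hNint fun n ω => abs_sum_range_sum_erase_mul_le (hC · ω) n

lemma integral_sum_range_sum_erase_mul_index [IsFiniteMeasure P] (hN : Measurable N)
    (hr : ∀ k, Measurable (r k)) (hNr : IndepFun N (fun ω k => r k ω) P)
    (hindep : Pairwise fun k k' => IndepFun (r k) (r k') P)
    (hC : ∀ k ω, |r k ω| ≤ C) (hmean : ∀ k, ∫ ω, r k ω ∂P = m)
    (hNint : Integrable (fun ω => ((N ω * (N ω - 1) : ℕ) : ℝ)) P) :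
    ∫ ω, ∑ k ∈ range (N ω), ∑ k' ∈ (range (N ω)).erase k, r k ω * r k' ω ∂P
      = m ^ 2 * ∫ ω, ((N ω * (N ω - 1) : ℕ) : ℝ) ∂P :=
  hNr.integral_comp_index (ψ := fun n x => ∑ k ∈ range n, ∑ k' ∈ (range n).erase k, x k * x k')
    (φ := fun n => ((n * (n - 1) : ℕ) : ℝ)) hN (measurable_pi_lambda _ hr)
    (fun _ => by fun_prop) hNint (fun n ω => abs_sum_range_sum_erase_mul_le (hC · ω) n)
    (integral_sum_range_sum_erase_mul (fun k => .of_bound (hr k).aestronglyMeasurable C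
      (.of_forall (hC k))) hindep hmean)

end RandomSum

section Estimator

variable {Ω : Type*} [MeasurableSpace Ω] {P : Measure Ω}

lemma integral_inv_integral_mul_eq {f g : Ω → ℝ} {m : ℝ} (hfg : ∫ ω, f ω ∂P = m * ∫ ω, g ω ∂P)
    (hg : ∫ ω, g ω ∂P ≠ 0) : ∫ ω, (∫ ω', g ω' ∂P)⁻¹ * f ω ∂P = m := by
  rw [integral_const_mul, hfg, mul_left_comm, inv_mul_cancel₀ hg, mul_one]

lemma integral_sum_mul_sq_sub_two_mul_add [IsProbabilityMeasure P] {I : Type*} [Fintype I]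
    (p y μ : I → ℝ) {E Q : I → Ω → ℝ} (hE : ∀ i, Integrable (E i) P)
    (hQ : ∀ i, Integrable (Q i) P) (hEmean : ∀ i, ∫ ω, E i ω ∂P = μ i)
    (hQmean : ∀ i, ∫ ω, Q i ω ∂P = μ i ^ 2) :
    ∫ ω, ∑ i, p i * (y i ^ 2 - 2 * y i * E i ω + Q i ω) ∂P = ∑ i, p i * (y i - μ i) ^ 2 := by
  have hlin (i : I) : Integrable (fun ω => y i ^ 2 - 2 * y i * E i ω) P :=
    (integrable_const _).sub ((hE i).const_mul _)
  have hterm (i : I) : Integrable (fun ω => p i * (y i ^ 2 - 2 * y i * E i ω + Q i ω)) P :=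
    ((hlin i).add (hQ i)).const_mul _
  rw [integral_finsetSum _ fun i _ => hterm i]
  refine sum_congr rfl fun i _ => ?_
  rw [integral_const_mul, integral_add (hlin i) (hQ i),
    integral_sub (integrable_const _) ((hE i).const_mul _), integral_const, integral_const_mul,
    hEmean, hQmean, probReal_univ, one_smul]
  ring

end Estimator

theorem unbiased_estimator_simplified_mse_general
    {Ω : Type*} [MeasurableSpace Ω] (P : Measure Ω) [IsProbabilityMeasure P]
    {I : Type*} [Fintype I]
    (p y μ : I → ℝ) (r : I → ℕ → Ω → ℝ) (s : I → Ω → ℕ)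
    (hrmeas : ∀ i k, Measurable (r i k))
    (hrbdd : ∀ i, ∃ C, ∀ k ω, |r i k ω| ≤ C)
    (hrindep : iIndepFun (fun p : I × ℕ => r p.1 p.2) P)
    (hrmean : ∀ i k, ∫ ω, r i k ω ∂P = μ i)
    (hsmeas : ∀ i, Measurable (s i))
    (hsindep : IndepFun (fun ω => fun i => s i ω)
      (fun ω => fun p : I × ℕ => r p.1 p.2 ω) P)
    (hspos : ∀ i, 0 < ∫ ω, (s i ω : ℝ) ∂P)
    (hsint : ∀ i, Integrable (fun ω => (s i ω : ℝ)) P)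
    (hs2pos : ∀ i, 0 < ∫ ω, ((s i ω * (s i ω - 1) : ℕ) : ℝ) ∂P)
    (hs2int : ∀ i, Integrable (fun ω => ((s i ω * (s i ω - 1) : ℕ) : ℝ)) P)
    (Ehat Qhat : I → Ω → ℝ) (Lhat : Ω → ℝ)
    (hEhat : ∀ i ω, Ehat i ω = (∫ ω', (s i ω' : ℝ) ∂P)⁻¹ *
      ∑ k ∈ Finset.range (s i ω), r i k ω)
    (hQhat : ∀ i ω, Qhat i ω = (∫ ω', ((s i ω' * (s i ω' - 1) : ℕ) : ℝ) ∂P)⁻¹ *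
      ∑ k ∈ Finset.range (s i ω), ∑ k' ∈ (Finset.range (s i ω)).erase k,
        r i k ω * r i k' ω)
    (hLhat : ∀ ω, Lhat ω = ∑ i, p i * ((y i) ^ 2 - 2 * y i * Ehat i ω + Qhat i ω)) :
    ∫ ω, Lhat ω ∂P = ∑ i, p i * (y i - μ i) ^ 2 := by
  have hunbiased (i : I) : (Integrable (Ehat i) P ∧ ∫ ω, Ehat i ω ∂P = μ i) ∧
      (Integrable (Qhat i) P ∧ ∫ ω, Qhat i ω ∂P = μ i ^ 2) := by
    obtain ⟨C, hC⟩ := hrbdd i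
    have hsr : IndepFun (s i) (fun ω k => r i k ω) P :=
      hsindep.comp (φ := fun v : I → ℕ => v i)
        (ψ := fun (x : I × ℕ → ℝ) k => x (i, k)) (by fun_prop) (by fun_prop)
    have hpair : Pairwise fun k k' => IndepFun (r i k) (r i k') P :=
      fun k k' hne => hrindep.indepFun (i := (i, k)) (j := (i, k')) (by simpa using hne)
    rw [funext (hEhat i), funext (hQhat i)]
    exact ⟨⟨(integrable_sum_range_index (hsmeas i) (hrmeas i) hC (hsint i)).const_mul _,
        integral_inv_integral_mul_eq (integral_sum_range_index (hsmeas i) (hrmeas i) hsr hC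
          (hrmean i) (hsint i)) (hspos i).ne'⟩,
      ⟨(integrable_sum_range_sum_erase_mul_index (hsmeas i) (hrmeas i) hC (hs2int i)).const_mul _,
        integral_inv_integral_mul_eq (integral_sum_range_sum_erase_mul_index (hsmeas i)
          (hrmeas i) hsr hpair hC (hrmean i) (hs2int i)) (hs2pos i).ne'⟩⟩
  rw [integral_congr_ae (.of_forall hLhat)]
  exact integral_sum_mul_sq_sub_two_mul_add p y μ (fun i => (hunbiased i).1.1)
    (fun i => (hunbiased i).2.1) (fun i => (hunbiased i).1.2) (fun i => (hunbiased i).2.2)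

/-- **Proposition 6 (Appendix E): unbiased estimator for the simplified MSE loss.**
For weights `p i`, labels `y i` and target expectations `μ i`, with i.i.d. bounded outcome
sequences `(r i k)` of mean `μ i` (mutually independent across distinct `i`), and shot counts
`(s i)` jointly independent of all outcomes with `E[s i] > 0` and `0 < E[s i (s i - 1)] < ∞`,
the estimator `L̂ = ∑ i, p i * ((y i)² - 2 y i Ê i + Q̂ i)` with
`Ê i = (1/E[s i]) ∑_{k=1}^{s i} r i k` and
`Q̂ i = (1/E[s i (s i -1)]) ∑_{1≤k,k'≤s i, k≠k'} r i k * r i k'` satisfies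
`E[L̂] = ∑ i, p i * (y i - μ i)²`. -/
theorem unbiased_estimator_simplified_mse
    {Ω : Type*} [MeasurableSpace Ω] (P : Measure Ω) [IsProbabilityMeasure P]
    {I : Type*} [Fintype I]
    (p y μ : I → ℝ) (r : I → ℕ → Ω → ℝ) (s : I → Ω → ℕ)
    (hrmeas : ∀ i k, Measurable (r i k))
    (hrbdd : ∀ i, ∃ C, ∀ k ω, |r i k ω| ≤ C)
    (hrindep : iIndepFun (fun p : I × ℕ => r p.1 p.2) P)
    (hrident : ∀ i k, IdentDistrib (r i k) (r i 0) P P)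
    (hrmean : ∀ i k, ∫ ω, r i k ω ∂P = μ i)
    (hsmeas : ∀ i, Measurable (s i))
    (hsindep : IndepFun (fun ω => fun i => s i ω)
      (fun ω => fun p : I × ℕ => r p.1 p.2 ω) P)
    (hspos : ∀ i, 0 < ∫ ω, (s i ω : ℝ) ∂P)
    (hsint : ∀ i, Integrable (fun ω => (s i ω : ℝ)) P)
    (hs2pos : ∀ i, 0 < ∫ ω, ((s i ω * (s i ω - 1) : ℕ) : ℝ) ∂P)
    (hs2int : ∀ i, Integrable (fun ω => ((s i ω * (s i ω - 1) : ℕ) : ℝ)) P)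
    (Ehat Qhat : I → Ω → ℝ) (Lhat : Ω → ℝ)
    (hEhat : ∀ i ω, Ehat i ω = (∫ ω', (s i ω' : ℝ) ∂P)⁻¹ *
      ∑ k ∈ Finset.range (s i ω), r i k ω)
    (hQhat : ∀ i ω, Qhat i ω = (∫ ω', ((s i ω' * (s i ω' - 1) : ℕ) : ℝ) ∂P)⁻¹ *
      ∑ k ∈ Finset.range (s i ω), ∑ k' ∈ (Finset.range (s i ω)).erase k,
        r i k ω * r i k' ω)
    (hLhat : ∀ ω, Lhat ω = ∑ i, p i * ((y i) ^ 2 - 2 * y i * Ehat i ω + Qhat i ω)) :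
    ∫ ω, Lhat ω ∂P = ∑ i, p i * (y i - μ i) ^ 2 :=
  unbiased_estimator_simplified_mse_general P p y μ r s hrmeas hrbdd hrindep hrmean hsmeas hsindep
    hspos hsint hs2pos hs2int Ehat Qhat Lhat hEhat hQhat hLhat
end

section
/- (Proposition 4, Appendix E: unbiased estimator for the full mean-squared-error loss with decomposed measurement operators.) Let I and J be finite index sets. For each i ∈ I let p_i ∈ ℝ be a weight and y_i ∈ ℝ a label; for each (i,j) ∈ I×J let c_{i,j} ∈ ℝ be a coefficient and μ_{i,j} ∈ ℝ a target expectation value. For each (i,j) let (r_{i,j,k})_{k≥1} be a sequence of i.i.d. bounded real random variables with mean μ_{i,j}, the sequences for distinct pairs (i,j) being mutually independent. Let (s_{i,j})_{(i,j)∈I×J} be a family of ℕ-valued random variables, jointly independent of all outcome sequences, with E[s_{i,j}] > 0, E[s_{i,j} s_{i,j'}] ∈ (0,∞) for j ≠ j', and E[s_{i,j}(s_{i,j}−1)] ∈ (0,∞) for all i,j. Define Ê_{i,j} = (1/E[s_{i,j}]) Σ_{k=1}^{s_{i,j}} r_{i,j,k}; for j ≠ j', Q̂_{i,j,j'} = (1/E[s_{i,j}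 s_{i,j'}]) Σ_{k=1}^{s_{i,j}} Σ_{k'=1}^{s_{i,j'}} r_{i,j,k} r_{i,j',k'}; and Q̂_{i,j} = (1/E[s_{i,j}(s_{i,j}−1)]) Σ_{1≤k,k'≤s_{i,j}, k≠k'} r_{i,j,k} r_{i,j,k'}. Define the estimator L̂′ = Σ_i p_i y_i² − 2 Σ_{i,j} p_i y_i c_{i,j} Ê_{i,j} + Σ_{i} Σ_{j≠j'} p_i c_{i,j} c_{i,j'} Q̂_{i,j,j'} + Σ_{i,j} p_i c_{i,j}² Q̂_{i,j}. Then E[L̂′] = Σ_{i∈I} p_i (y_i − Σ_{j∈J} c_{i,j} μ_{i,j})². -/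
/-
Each estimator is a random sum `∑ k ∈ F (N ω), X k ω` whose index set is read off the shot
counts `N`. Splitting `Ω` along the countably many fibres `{N = a}` and using that `N` is
independent of every outcome `X k`, each summand contributes its mean on each fibre, which gives
the Wald-type identity `E[∑ k ∈ F N, X k] = m * E[#F N]`. With `F` the range, a product of two
ranges, or the off-diagonal of a range, and with distinct outcomes independent, the normalised
sums `Ê`, `Q̂ j j'`, `Q̂ j` are unbiased for `μ j`, `μ j * μ j'`, `μ j ^ 2`. By linearity of
expectation, `E[L̂']` is then the expansion of `∑ i, p i * (y i - ∑ j, c i j * μ i j) ^ 2`.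
-/

open MeasureTheory ProbabilityTheory Finset

def IsUnbiasedEstimator {Ω : Type*} [MeasurableSpace Ω] (P : Measure Ω) (f : Ω → ℝ) (m : ℝ) :
    Prop :=
  Integrable f P ∧ ∫ ω, f ω ∂P = m

namespace IsUnbiasedEstimator

variable {Ω : Type*} [MeasurableSpace Ω] {P : Measure Ω} {f g : Ω → ℝ} {a b : ℝ}

theorem const [IsProbabilityMeasure P] (c : ℝ) : IsUnbiasedEstimator P (fun _ => c) c :=
  ⟨integrable_const c, by simp⟩

theorem add (hf : IsUnbiasedEstimator P f a) (hg : IsUnbiasedEstimator P g b) :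
    IsUnbiasedEstimator P (fun ω => f ω + g ω) (a + b) :=
  ⟨hf.1.add hg.1, by rw [integral_add hf.1 hg.1, hf.2, hg.2]⟩

theorem sub (hf : IsUnbiasedEstimator P f a) (hg : IsUnbiasedEstimator P g b) :
    IsUnbiasedEstimator P (fun ω => f ω - g ω) (a - b) :=
  ⟨hf.1.sub hg.1, by rw [integral_sub hf.1 hg.1, hf.2, hg.2]⟩

theorem const_mul (hf : IsUnbiasedEstimator P f a) (c : ℝ) :
    IsUnbiasedEstimator P (fun ω => c * f ω) (c * a) :=
  ⟨hf.1.const_mul c, by rw [integral_const_mul, hf.2]⟩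

theorem sum {ι : Type*} {s : Finset ι} {f : ι → Ω → ℝ} {a : ι → ℝ}
    (h : ∀ i ∈ s, IsUnbiasedEstimator P (f i) (a i)) :
    IsUnbiasedEstimator P (fun ω => ∑ i ∈ s, f i ω) (∑ i ∈ s, a i) :=
  ⟨integrable_finsetSum s fun i hi => (h i hi).1, by
    rw [integral_finsetSum s fun i hi => (h i hi).1]; exact sum_congr rfl fun i hi => (h i hi).2⟩

theorem congr (hf : IsUnbiasedEstimator P f a) (hfg : ∀ ω, f ω = g ω) :
    IsUnbiasedEstimator P g a :=
  funext hfg ▸ hf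

theorem inv_mul_of_eq_mul (hf : IsUnbiasedEstimator P f (a * b)) (hb : b ≠ 0) :
    IsUnbiasedEstimator P (fun ω => b⁻¹ * f ω) a := by
  simpa [mul_comm a, hb] using hf.const_mul b⁻¹

end IsUnbiasedEstimator

section Wald

variable {Ω α κ : Type*} [MeasurableSpace Ω] {P : Measure Ω}
  [MeasurableSpace α] [MeasurableSingletonClass α] [Countable α] {N : Ω → α}

theorem integral_eq_tsum_setIntegral_fiber {E : Type*} [NormedAddCommGroup E] [NormedSpace ℝ E]
    (hN : Measurable N) {f : Ω → E} (hf : Integrable f P) :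
    ∫ ω, f ω ∂P = ∑' a, ∫ ω in N ⁻¹' {a}, f ω ∂P := by
  have hcover : ⋃ a, N ⁻¹' {a} = Set.univ := by ext; simp
  rw [← setIntegral_univ, ← hcover]
  exact integral_iUnion (fun a => hN (measurableSet_singleton a))
    (pairwise_disjoint_fiber N) (hcover ▸ hf.integrableOn)

theorem integrable_sum_finset_comp (hN : Measurable N) (F : α → Finset κ) {X : κ → Ω → ℝ}
    (hX : ∀ k, Measurable (X k)) {C : ℝ} (hXC : ∀ k ω, |X k ω| ≤ C)
    (hF : Integrable (fun ω => (#(F (N ω)) : ℝ)) P) :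
    Integrable (fun ω => ∑ k ∈ F (N ω), X k ω) P := by
  have hmeas : Measurable fun ω => ∑ k ∈ F (N ω), X k ω :=
    (measurable_from_prod_countable_left (f := fun x : Ω × α => ∑ k ∈ F x.2, X k x.1)
      fun a => Finset.measurable_sum (F a) fun k _ => hX k).comp (measurable_id.prodMk hN)
  refine (hF.mul_const C).mono' hmeas.aestronglyMeasurable (ae_of_all _ fun ω => ?_)
  calc ‖∑ k ∈ F (N ω), X k ω‖ ≤ ∑ k ∈ F (N ω), |X k ω| := by
        simpa only [Real.norm_eq_abs] using abs_sum_le_sum_abs _ _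
    _ ≤ #(F (N ω)) * C := by simpa using sum_le_card_nsmul _ _ _ fun k _ => hXC k ω

theorem isUnbiasedEstimator_sum_finset_comp [IsFiniteMeasure P] (hN : Measurable N)
    (F : α → Finset κ) {X : κ → Ω → ℝ} (hX : ∀ k, Measurable (X k)) {C : ℝ}
    (hXC : ∀ k ω, |X k ω| ≤ C) (hind : ∀ k, IndepFun N (X k) P) {m : ℝ}
    (hmean : ∀ a, ∀ k ∈ F a, ∫ ω, X k ω ∂P = m)
    (hF : Integrable (fun ω => (#(F (N ω)) : ℝ)) P) :
    IsUnbiasedEstimator P (fun ω => ∑ k ∈ F (N ω), X k ω) (m * ∫ ω, (#(F (N ω)) : ℝ) ∂P) := by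
  refine ⟨integrable_sum_finset_comp hN F hX hXC hF, ?_⟩
  have hXint : ∀ k, Integrable (X k) P := fun k =>
    (integrable_const C).mono' (hX k).aestronglyMeasurable (ae_of_all _ fun ω => hXC k ω)
  rw [integral_eq_tsum_setIntegral_fiber hN (integrable_sum_finset_comp hN F hX hXC hF),
    integral_eq_tsum_setIntegral_fiber hN hF, ← tsum_mul_left]
  refine tsum_congr fun a => ?_
  have hfiber (h : α → Ω → ℝ) :
      ∫ ω in N ⁻¹' {a}, h (N ω) ω ∂P = ∫ ω in N ⁻¹' {a}, h a ω ∂P :=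
    setIntegral_congr_fun (hN (measurableSet_singleton a)) fun ω hω => by
      rw [Set.mem_singleton_iff.mp hω]
  have hsetIntegral (k : κ) :
      ∫ ω in N ⁻¹' {a}, X k ω ∂P = P.real (N ⁻¹' {a}) * ∫ ω, X k ω ∂P :=
    ((IndepFun_iff_Indep _ _ _).mp (hind k)).setIntegral_eq_mul (f := id) hN.comap_le
      (hX k).aemeasurable ⟨{a}, measurableSet_singleton a, rfl⟩ aestronglyMeasurable_id
  calc ∫ ω in N ⁻¹' {a}, ∑ k ∈ F (N ω), X k ω ∂P
      = ∫ ω in N ⁻¹' {a}, ∑ k ∈ F a, X k ω ∂P := hfiber fun b ω => ∑ k ∈ F b, X k ω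
    _ = ∑ k ∈ F a, P.real (N ⁻¹' {a}) * m := by
      rw [integral_finsetSum _ fun k _ => (hXint k).integrableOn]
      exact sum_congr rfl fun k hk => by rw [hsetIntegral, hmean a k hk]
    _ = m * ∫ ω in N ⁻¹' {a}, (#(F (N ω)) : ℝ) ∂P := by
      rw [hfiber fun b _ => (#(F b) : ℝ), setIntegral_const, sum_const, smul_eq_mul,
        nsmul_eq_mul]
      ring

end Wald

theorem Finset.sq_sum_eq_sum_sum_erase_add_sum_sq {ι R : Type*} [CommSemiring R] [DecidableEq ι]
    (s : Finset ι) (f : ι → R) :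
    (∑ i ∈ s, f i) ^ 2 = ∑ i ∈ s, ∑ j ∈ s.erase i, f i * f j + ∑ i ∈ s, f i ^ 2 := by
  rw [sq, sum_mul_sum, ← sum_add_distrib]
  exact sum_congr rfl fun i hi => by rw [sq, sum_erase_add _ _ hi]

theorem Finset.sum_offDiag_eq_sum_sum_erase {ι M : Type*} [AddCommMonoid M] [DecidableEq ι]
    (s : Finset ι) (f : ι × ι → M) :
    ∑ x ∈ s.offDiag, f x = ∑ i ∈ s, ∑ j ∈ s.erase i, f (i, j) :=
  sum_finset_product _ _ _ fun x => by simp only [mem_offDiag, mem_erase]; tauto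

theorem abs_mul_le_mul_of_abs_le {R : Type*} [Ring R] [LinearOrder R] [IsOrderedRing R]
    {a b C D : R} (ha : |a| ≤ C) (hb : |b| ≤ D) : |a * b| ≤ C * D :=
  abs_mul a b ▸ mul_le_mul ha hb (abs_nonneg b) ((abs_nonneg a).trans ha)

section ShotEstimators

variable {Ω : Type*} [MeasurableSpace Ω] {P : Measure Ω} [IsFiniteMeasure P]
  {s s' : Ω → ℕ} {r r' : ℕ → Ω → ℝ} {m m' C C' : ℝ}

theorem isUnbiasedEstimator_inv_mul_sum_range (hs : Measurable s) (hr : ∀ k, Measurable (r k))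
    (hC : ∀ k ω, |r k ω| ≤ C) (hsr : ∀ k, IndepFun s (r k) P) (hmean : ∀ k, ∫ ω, r k ω ∂P = m)
    (hsint : Integrable (fun ω => (s ω : ℝ)) P) (hspos : ∫ ω, (s ω : ℝ) ∂P ≠ 0) :
    IsUnbiasedEstimator P (fun ω => (∫ ω', (s ω' : ℝ) ∂P)⁻¹ * ∑ k ∈ range (s ω), r k ω) m := by
  refine IsUnbiasedEstimator.inv_mul_of_eq_mul ?_ hspos
  simpa only [card_range] using isUnbiasedEstimator_sum_finset_comp hs range hr hC hsr
    (fun _ k _ => hmean k) (by simpa only [card_range] using hsint)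

theorem isUnbiasedEstimator_inv_mul_sum_range_mul_sum_range (hs : Measurable s)
    (hs' : Measurable s') (hr : ∀ k, Measurable (r k)) (hr' : ∀ k, Measurable (r' k))
    (hC : ∀ k ω, |r k ω| ≤ C) (hC' : ∀ k ω, |r' k ω| ≤ C')
    (hsr : ∀ k k', IndepFun (fun ω => (s ω, s' ω)) (fun ω => r k ω * r' k' ω) P)
    (hrr' : ∀ k k', IndepFun (r k) (r' k') P)
    (hmean : ∀ k, ∫ ω, r k ω ∂P = m) (hmean' : ∀ k, ∫ ω, r' k ω ∂P = m')
    (hsint : Integrable (fun ω => ((s ω * s' ω : ℕ) : ℝ)) P)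
    (hspos : ∫ ω, ((s ω * s' ω : ℕ) : ℝ) ∂P ≠ 0) :
    IsUnbiasedEstimator P
      (fun ω => (∫ ω', ((s ω' * s' ω' : ℕ) : ℝ) ∂P)⁻¹ *
        ∑ k ∈ range (s ω), ∑ k' ∈ range (s' ω), r k ω * r' k' ω) (m * m') := by
  refine IsUnbiasedEstimator.inv_mul_of_eq_mul ?_ hspos
  simpa only [card_product, card_range, sum_product] using
    isUnbiasedEstimator_sum_finset_comp (hs.prodMk hs') (fun n => range n.1 ×ˢ range n.2)
      (X := fun k ω => r k.1 ω * r' k.2 ω) (fun k => (hr k.1).mul (hr' k.2))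
      (fun k ω => abs_mul_le_mul_of_abs_le (hC k.1 ω) (hC' k.2 ω)) (fun k => hsr k.1 k.2)
      (fun _ k _ => by
        rw [(hrr' k.1 k.2).integral_fun_mul_eq_mul_integral (hr k.1).aestronglyMeasurable
          (hr' k.2).aestronglyMeasurable, hmean, hmean'])
      (by simpa only [card_product, card_range] using hsint)

theorem isUnbiasedEstimator_inv_mul_sum_range_sum_erase (hs : Measurable s)
    (hr : ∀ k, Measurable (r k)) (hC : ∀ k ω, |r k ω| ≤ C)
    (hsr : ∀ k k', IndepFun s (fun ω => r k ω * r k' ω) P)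
    (hrr : ∀ k k', k ≠ k' → IndepFun (r k) (r k') P) (hmean : ∀ k, ∫ ω, r k ω ∂P = m)
    (hsint : Integrable (fun ω => ((s ω * (s ω - 1) : ℕ) : ℝ)) P)
    (hspos : ∫ ω, ((s ω * (s ω - 1) : ℕ) : ℝ) ∂P ≠ 0) :
    IsUnbiasedEstimator P
      (fun ω => (∫ ω', ((s ω' * (s ω' - 1) : ℕ) : ℝ) ∂P)⁻¹ *
        ∑ k ∈ range (s ω), ∑ k' ∈ (range (s ω)).erase k, r k ω * r k' ω) (m * m) := by
  refine IsUnbiasedEstimator.inv_mul_of_eq_mul ?_ hspos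
  simpa only [offDiag_card, card_range, ← Nat.mul_sub_one, sum_offDiag_eq_sum_sum_erase] using
    isUnbiasedEstimator_sum_finset_comp hs (fun n => (range n).offDiag)
      (X := fun k ω => r k.1 ω * r k.2 ω) (fun k => (hr k.1).mul (hr k.2))
      (fun k ω => abs_mul_le_mul_of_abs_le (hC k.1 ω) (hC k.2 ω)) (fun k => hsr k.1 k.2)
      (fun _ k hk => by
        rw [(hrr k.1 k.2 (mem_offDiag.mp hk).2.2).integral_fun_mul_eq_mul_integral
          (hr k.1).aestronglyMeasurable (hr k.2).aestronglyMeasurable, hmean, hmean])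
      (by simpa only [offDiag_card, card_range, ← Nat.mul_sub_one] using hsint)

end ShotEstimators

theorem sum_mul_sub_sum_sq_eq {I J R : Type*} [Fintype I] [Fintype J] [DecidableEq J]
    [CommRing R] (p y : I → R) (c μ : I → J → R) :
    ∑ i, p i * (y i - ∑ j, c i j * μ i j) ^ 2 =
      (∑ i, p i * y i ^ 2) - 2 * (∑ i, ∑ j, p i * y i * c i j * μ i j) +
        (∑ i, ∑ j, ∑ j' ∈ univ.erase j, p i * c i j * c i j' * (μ i j * μ i j')) +
        ∑ i, ∑ j, p i * c i j ^ 2 * (μ i j * μ i j) := by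
  simp only [sub_sq, sq_sum_eq_sum_sum_erase_add_sum_sq]
  simp only [mul_add, mul_sub, sum_add_distrib, sum_sub_distrib, mul_sum]
  ring_nf
  simp only [mul_comm, mul_assoc, mul_left_comm]
  ring

theorem unbiased_estimator_full_mse_general
    {Ω : Type*} [MeasurableSpace Ω] (P : Measure Ω) [IsProbabilityMeasure P]
    {I : Type*} [Fintype I] {J : Type*} [Fintype J] [DecidableEq J]
    (p y : I → ℝ) (c μ : I → J → ℝ)
    (r : I → J → ℕ → Ω → ℝ) (s : I → J → Ω → ℕ)
    (hrmeas : ∀ i j k, Measurable (r i j k))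
    (hrbdd : ∀ i j, ∃ C, ∀ k ω, |r i j k ω| ≤ C)
    (hrindep : iIndepFun
      (fun q : (I × J) × ℕ => r q.1.1 q.1.2 q.2) P)
    (hrmean : ∀ i j k, ∫ ω, r i j k ω ∂P = μ i j)
    (hsmeas : ∀ i j, Measurable (s i j))
    (hsindep : IndepFun (fun ω => fun q : I × J => s q.1 q.2 ω)
      (fun ω => fun q : (I × J) × ℕ => r q.1.1 q.1.2 q.2 ω) P)
    (hspos : ∀ i j, 0 < ∫ ω, (s i j ω : ℝ) ∂P)
    (hsint : ∀ i j, Integrable (fun ω => (s i j ω : ℝ)) P)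
    (hscrosspos : ∀ i j j', j ≠ j' → 0 < ∫ ω, ((s i j ω * s i j' ω : ℕ) : ℝ) ∂P)
    (hscrossint : ∀ i j j', j ≠ j' →
      Integrable (fun ω => ((s i j ω * s i j' ω : ℕ) : ℝ)) P)
    (hs2pos : ∀ i j, 0 < ∫ ω, ((s i j ω * (s i j ω - 1) : ℕ) : ℝ) ∂P)
    (hs2int : ∀ i j, Integrable (fun ω => ((s i j ω * (s i j ω - 1) : ℕ) : ℝ)) P)
    (Ehat : I → J → Ω → ℝ) (Qcross : I → J → J → Ω → ℝ) (Qhat : I → J → Ω → ℝ)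
    (Lhat : Ω → ℝ)
    (hEhat : ∀ i j ω, Ehat i j ω = (∫ ω', (s i j ω' : ℝ) ∂P)⁻¹ *
      ∑ k ∈ Finset.range (s i j ω), r i j k ω)
    (hQcross : ∀ i j j' ω, j ≠ j' → Qcross i j j' ω =
      (∫ ω', ((s i j ω' * s i j' ω' : ℕ) : ℝ) ∂P)⁻¹ *
        ∑ k ∈ Finset.range (s i j ω), ∑ k' ∈ Finset.range (s i j' ω),
          r i j k ω * r i j' k' ω)
    (hQhat : ∀ i j ω, Qhat i j ω =
      (∫ ω', ((s i j ω' * (s i j ω' - 1) : ℕ) : ℝ) ∂P)⁻¹ *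
        ∑ k ∈ Finset.range (s i j ω), ∑ k' ∈ (Finset.range (s i j ω)).erase k,
          r i j k ω * r i j k' ω)
    (hLhat : ∀ ω, Lhat ω =
      (∑ i, p i * (y i) ^ 2) - 2 * (∑ i, ∑ j, p i * y i * c i j * Ehat i j ω) +
        (∑ i, ∑ j, ∑ j' ∈ Finset.univ.erase j,
          p i * c i j * c i j' * Qcross i j j' ω) +
        ∑ i, ∑ j, p i * (c i j) ^ 2 * Qhat i j ω) :
    ∫ ω, Lhat ω ∂P = ∑ i, p i * (y i - ∑ j, c i j * μ i j) ^ 2 := by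
  choose C hC using hrbdd
  have hE (i : I) (j : J) : IsUnbiasedEstimator P (Ehat i j) (μ i j) :=
    (isUnbiasedEstimator_inv_mul_sum_range (hsmeas i j) (hrmeas i j) (hC i j)
      (fun k => hsindep.comp (measurable_pi_apply (i, j)) (measurable_pi_apply ((i, j), k)))
      (hrmean i j) (hsint i j) (hspos i j).ne').congr fun ω => (hEhat i j ω).symm
  have hQc (i : I) (j j' : J) (hjj' : j ≠ j') :
      IsUnbiasedEstimator P (Qcross i j j') (μ i j * μ i j') :=
    (isUnbiasedEstimator_inv_mul_sum_range_mul_sum_range (hsmeas i j) (hsmeas i j')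
      (hrmeas i j) (hrmeas i j') (hC i j) (hC i j')
      (fun k k' => hsindep.comp
        ((measurable_pi_apply (i, j)).prodMk (measurable_pi_apply (i, j')))
        ((measurable_pi_apply ((i, j), k)).mul (measurable_pi_apply ((i, j'), k'))))
      (fun k k' => hrindep.indepFun (i := ((i, j), k)) (j := ((i, j'), k')) (by simp [hjj']))
      (hrmean i j) (hrmean i j') (hscrossint i j j' hjj') (hscrosspos i j j' hjj').ne').congr
      fun ω => (hQcross i j j' ω hjj').symm
  have hQh (i : I) (j : J) : IsUnbiasedEstimator P (Qhat i j) (μ i j * μ i j) :=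
    (isUnbiasedEstimator_inv_mul_sum_range_sum_erase (hsmeas i j) (hrmeas i j) (hC i j)
      (fun k k' => hsindep.comp (measurable_pi_apply (i, j))
        ((measurable_pi_apply ((i, j), k)).mul (measurable_pi_apply ((i, j), k'))))
      (fun k k' hkk' => hrindep.indepFun (i := ((i, j), k)) (j := ((i, j), k')) (by simp [hkk']))
      (hrmean i j) (hs2int i j) (hs2pos i j).ne').congr fun ω => (hQhat i j ω).symm
  obtain ⟨-, hL⟩ : IsUnbiasedEstimator P Lhat _ := by
    rw [funext hLhat]
    exact (((IsUnbiasedEstimator.const _).sub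
      ((IsUnbiasedEstimator.sum fun i _ => .sum fun j _ => (hE i j).const_mul _).const_mul 2)).add
      (.sum fun i _ => .sum fun j _ => .sum fun j' hj' =>
        (hQc i j j' (ne_of_mem_erase hj').symm).const_mul _)).add
      (.sum fun i _ => .sum fun j _ => (hQh i j).const_mul _)
  rw [hL, sum_mul_sub_sum_sq_eq]

/-- **Proposition 4 (Appendix E): unbiased estimator for the full MSE loss with decomposed
measurement operators.** With weights `p i`, labels `y i`, coefficients `c i j` and target
expectations `μ i j`, i.i.d. bounded outcome sequences `(r i j k)` of mean `μ i j` (mutually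
independent across distinct pairs `(i,j)`), and shot counts `(s i j)` jointly independent of
all outcomes, the estimator
`L̂' = ∑ i, p i (y i)² - 2 ∑ i j, p i * y i * c i j * Ê i j
  + ∑ i, ∑ j ≠ j', p i * c i j * c i j' * Q̂ i j j' + ∑ i j, p i * (c i j)² * Q̂ i j`
satisfies `E[L̂'] = ∑ i, p i * (y i - ∑ j, c i j * μ i j)²`. -/
theorem unbiased_estimator_full_mse
    {Ω : Type*} [MeasurableSpace Ω] (P : Measure Ω) [IsProbabilityMeasure P]
    {I : Type*} [Fintype I] {J : Type*} [Fintype J] [DecidableEq J]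
    (p y : I → ℝ) (c μ : I → J → ℝ)
    (r : I → J → ℕ → Ω → ℝ) (s : I → J → Ω → ℕ)
    (hrmeas : ∀ i j k, Measurable (r i j k))
    (hrbdd : ∀ i j, ∃ C, ∀ k ω, |r i j k ω| ≤ C)
    (hrindep : iIndepFun
      (fun q : (I × J) × ℕ => r q.1.1 q.1.2 q.2) P)
    (hrident : ∀ i j k, IdentDistrib (r i j k) (r i j 0) P P)
    (hrmean : ∀ i j k, ∫ ω, r i j k ω ∂P = μ i j)
    (hsmeas : ∀ i j, Measurable (s i j))
    (hsindep : IndepFun (fun ω => fun q : I × J => s q.1 q.2 ω)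
      (fun ω => fun q : (I × J) × ℕ => r q.1.1 q.1.2 q.2 ω) P)
    (hspos : ∀ i j, 0 < ∫ ω, (s i j ω : ℝ) ∂P)
    (hsint : ∀ i j, Integrable (fun ω => (s i j ω : ℝ)) P)
    (hscrosspos : ∀ i j j', j ≠ j' → 0 < ∫ ω, ((s i j ω * s i j' ω : ℕ) : ℝ) ∂P)
    (hscrossint : ∀ i j j', j ≠ j' →
      Integrable (fun ω => ((s i j ω * s i j' ω : ℕ) : ℝ)) P)
    (hs2pos : ∀ i j, 0 < ∫ ω, ((s i j ω * (s i j ω - 1) : ℕ) : ℝ) ∂P)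
    (hs2int : ∀ i j, Integrable (fun ω => ((s i j ω * (s i j ω - 1) : ℕ) : ℝ)) P)
    (Ehat : I → J → Ω → ℝ) (Qcross : I → J → J → Ω → ℝ) (Qhat : I → J → Ω → ℝ)
    (Lhat : Ω → ℝ)
    (hEhat : ∀ i j ω, Ehat i j ω = (∫ ω', (s i j ω' : ℝ) ∂P)⁻¹ *
      ∑ k ∈ Finset.range (s i j ω), r i j k ω)
    (hQcross : ∀ i j j' ω, j ≠ j' → Qcross i j j' ω =
      (∫ ω', ((s i j ω' * s i j' ω' : ℕ) : ℝ) ∂P)⁻¹ *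
        ∑ k ∈ Finset.range (s i j ω), ∑ k' ∈ Finset.range (s i j' ω),
          r i j k ω * r i j' k' ω)
    (hQhat : ∀ i j ω, Qhat i j ω =
      (∫ ω', ((s i j ω' * (s i j ω' - 1) : ℕ) : ℝ) ∂P)⁻¹ *
        ∑ k ∈ Finset.range (s i j ω), ∑ k' ∈ (Finset.range (s i j ω)).erase k,
          r i j k ω * r i j k' ω)
    (hLhat : ∀ ω, Lhat ω =
      (∑ i, p i * (y i) ^ 2) - 2 * (∑ i, ∑ j, p i * y i * c i j * Ehat i j ω) +
        (∑ i, ∑ j, ∑ j' ∈ Finset.univ.erase j,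
          p i * c i j * c i j' * Qcross i j j' ω) +
        ∑ i, ∑ j, p i * (c i j) ^ 2 * Qhat i j ω) :
    ∫ ω, Lhat ω ∂P = ∑ i, p i * (y i - ∑ j, c i j * μ i j) ^ 2 :=
  unbiased_estimator_full_mse_general P p y c μ r s hrmeas hrbdd hrindep hrmean hsmeas hsindep hspos
    hsint hscrosspos hscrossint hs2pos hs2int Ehat Qcross Qhat Lhat hEhat hQcross hQhat hLhat
end

section
/- (Multi-group falling-factorial lemma supporting Proposition 5.) Let J ≥ 1 and for each j ∈ {1,…,J} let b_j ≥ 0 be an integer, let (r_{j,k})_{k≥1} be a sequence of i.i.d. bounded real random variables with mean μ_j, the sequences for distinct j being mutually independent, and let (s_1,…,s_J) be a vector of ℕ-valued random variables, jointly independent of all outcome sequences, with E[∏_{j=1}^{J} s_j(s_j−1)⋯(s_j−b_j+1)] finite. For each j let T_j denote the sum over all ordered b_j-tuples (k_1,…,k_{b_j}) of pairwise distinct indices in {1,…,s_j} of the product r_{j,k_1}⋯r_{j,k_{b_j}} (with T_j = 1 if b_j = 0). Then E[∏_{j=1}^{J} T_j] = E[∏_{j=1}^{J} s_j(s_j−1)⋯(s_j−b_j+1)]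 · ∏_{j=1}^{J} μ_j^{b_j}. -/
/-!
Expanding the product of sums, `∏ j, T j` is a sum over families of injections
`g j : Fin (b j) ↪ Fin (s j)`; each term is a product of outcomes at pairwise distinct
indices `(j, g j β)`, hence by independence has mean `∏ j, μ j ^ b j`, and there are
`∏ j, (s j)⁻(b j)` terms. Since the shot counts are independent of the outcomes, one may
first fix them (Fubini on the product of the two laws) and then average this count.
-/

open MeasureTheory ProbabilityTheory

theorem abs_prod_le_pow_card_s11 {ι : Type*} [Fintype ι] {f : ι → ℝ} {C : ℝ}
    (h : ∀ i, |f i| ≤ C) : |∏ i, f i| ≤ C ^ Fintype.card ι := by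
  rw [Finset.abs_prod]
  exact (Finset.prod_le_prod (fun _ _ => abs_nonneg _) fun i _ => h i).trans_eq (by simp)

theorem ProbabilityTheory.IndepFun.integral_comp_eq_integral_integral {Ω α β E : Type*}
    [MeasurableSpace Ω] [MeasurableSpace α] [MeasurableSpace β]
    [NormedAddCommGroup E] [NormedSpace ℝ E]
    {P : Measure Ω} [IsFiniteMeasure P] {X : Ω → α} {Y : Ω → β} (hXY : IndepFun X Y P)
    (hX : Measurable X) (hY : Measurable Y) {F : α × β → E} (hF : StronglyMeasurable F)
    (hint : Integrable (fun ω => F (X ω, Y ω)) P) :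
    ∫ ω, F (X ω, Y ω) ∂P = ∫ x, ∫ ω, F (x, Y ω) ∂P ∂(P.map X) := by
  have hmap : P.map (fun ω => (X ω, Y ω)) = (P.map X).prod (P.map Y) :=
    (indepFun_iff_map_prod_eq_prod_map_map hX.aemeasurable hY.aemeasurable).1 hXY
  have hpair : AEMeasurable (fun ω => (X ω, Y ω)) P := (hX.prodMk hY).aemeasurable
  rw [← integral_map hpair hF.aestronglyMeasurable, hmap, integral_prod]
  · refine integral_congr_ae (ae_of_all _ fun x => ?_)
    exact integral_map hY.aemeasurable
      (hF.comp_measurable measurable_prodMk_left).aestronglyMeasurable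
  · rw [← hmap]
    exact (integrable_map_measure hF.aestronglyMeasurable hpair).2 hint

noncomputable def distinctTupleSum {J : ℕ} (b x : Fin J → ℕ) (y : Fin J × ℕ → ℝ) : ℝ :=
  ∏ j, ∑ f : Fin (b j) ↪ Fin (x j), ∏ β, y (j, f β)

namespace distinctTupleSum

variable {J : ℕ} (b : Fin J → ℕ)

theorem eq_sum (x : Fin J → ℕ) (y : Fin J × ℕ → ℝ) :
    distinctTupleSum b x y =
      ∑ g : (∀ j, Fin (b j) ↪ Fin (x j)), ∏ p : (Σ j, Fin (b j)), y (p.1, g p.1 p.2) := by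
  rw [distinctTupleSum, Finset.prod_univ_sum, Fintype.piFinset_univ]
  simp only [← Finset.univ_sigma_univ, Finset.prod_sigma]

theorem card_embeddings (x : Fin J → ℕ) :
    Fintype.card (∀ j, Fin (b j) ↪ Fin (x j)) = ∏ j, (x j).descFactorial (b j) := by
  simp only [Fintype.card_pi, Fintype.card_embedding_eq, Fintype.card_fin]

theorem injective_sigma {x : Fin J → ℕ} (g : ∀ j, Fin (b j) ↪ Fin (x j)) :
    Function.Injective fun p : (Σ j, Fin (b j)) => (p.1, (g p.1 p.2 : ℕ)) := by
  rintro ⟨j, β⟩ ⟨j', β'⟩ h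
  obtain ⟨rfl, h⟩ := Prod.ext_iff.1 h
  simpa using (g j).injective (Fin.val_injective h)

theorem measurable_right (x : Fin J → ℕ) : Measurable (distinctTupleSum b x) := by
  unfold distinctTupleSum
  fun_prop

theorem measurable :
    Measurable fun p : (Fin J → ℕ) × (Fin J × ℕ → ℝ) => distinctTupleSum b p.1 p.2 :=
  measurable_from_prod_countable_right (measurable_right b)

theorem abs_le {C : ℝ} {y : Fin J × ℕ → ℝ} (hC : ∀ q, |y q| ≤ C) (x : Fin J → ℕ) :
    |distinctTupleSum b x y| ≤ (∏ j, (x j).descFactorial (b j) : ℕ) * C ^ ∑ j, b j := by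
  have hterm (g : ∀ j, Fin (b j) ↪ Fin (x j)) :
      |∏ p : (Σ j, Fin (b j)), y (p.1, g p.1 p.2)| ≤ C ^ ∑ j, b j :=
    (abs_prod_le_pow_card_s11 fun _ => hC _).trans_eq (by simp)
  rw [eq_sum, ← card_embeddings, ← nsmul_eq_mul, ← Finset.card_univ]
  exact (Finset.abs_sum_le_sum_abs _ _).trans (Finset.sum_le_card_nsmul _ _ _ fun g _ => hterm g)

variable {Ω : Type*} [MeasurableSpace Ω] {P : Measure Ω} [IsProbabilityMeasure P]

theorem integral_eq {R : Fin J × ℕ → Ω → ℝ} (hR : iIndepFun R P)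
    (hmeas : ∀ q, Measurable (R q)) {C : ℝ} (hC : ∀ q ω, |R q ω| ≤ C) {μ : Fin J → ℝ}
    (hmean : ∀ q, ∫ ω, R q ω ∂P = μ q.1) (x : Fin J → ℕ) :
    ∫ ω, distinctTupleSum b x (fun q => R q ω) ∂P =
      (∏ j, (x j).descFactorial (b j) : ℕ) * ∏ j, μ j ^ b j := by
  have hterm (g : ∀ j, Fin (b j) ↪ Fin (x j)) :
      ∫ ω, ∏ p : (Σ j, Fin (b j)), R (p.1, g p.1 p.2) ω ∂P = ∏ j, μ j ^ b j := by
    rw [(hR.precomp (injective_sigma b g)).integral_fun_prod_eq_prod_integral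
      fun p => (hmeas _).aestronglyMeasurable]
    simp [hmean, ← Finset.univ_sigma_univ, Finset.prod_sigma]
  have hint (g : ∀ j, Fin (b j) ↪ Fin (x j)) :
      Integrable (fun ω => ∏ p : (Σ j, Fin (b j)), R (p.1, g p.1 p.2) ω) P :=
    .of_bound (Finset.measurable_prod _ fun p _ => hmeas _).aestronglyMeasurable _
      (ae_of_all _ fun ω => abs_prod_le_pow_card_s11 fun _ => hC _ ω)
  simp_rw [eq_sum, integral_finsetSum _ fun g _ => hint g, hterm]
  rw [Finset.sum_const, Finset.card_univ, card_embeddings, nsmul_eq_mul]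

end distinctTupleSum

theorem multigroup_falling_factorial_general
    {Ω : Type*} [MeasurableSpace Ω] (P : Measure Ω) [IsProbabilityMeasure P]
    (J : ℕ) (b : Fin J → ℕ) (μ : Fin J → ℝ)
    (r : Fin J → ℕ → Ω → ℝ) (s : Fin J → Ω → ℕ)
    (hrmeas : ∀ j k, Measurable (r j k))
    (hrbdd : ∀ j, ∃ C, ∀ k ω, |r j k ω| ≤ C)
    (hrindep : iIndepFun
      (fun q : Fin J × ℕ => r q.1 q.2) P)
    (hrmean : ∀ j k, ∫ ω, r j k ω ∂P = μ j)
    (hsmeas : ∀ j, Measurable (s j))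
    (hsindep : IndepFun (fun ω => fun j => s j ω)
      (fun ω => fun q : Fin J × ℕ => r q.1 q.2 ω) P)
    (hdescint : Integrable
      (fun ω => ((∏ j, (s j ω).descFactorial (b j) : ℕ) : ℝ)) P) :
    ∫ ω, ∏ j, (∑ f : Fin (b j) ↪ Fin (s j ω), ∏ β, r j (f β : ℕ) ω) ∂P =
      (∫ ω, ((∏ j, (s j ω).descFactorial (b j) : ℕ) : ℝ) ∂P) *
        ∏ j, (μ j) ^ (b j) := by
  choose C hC using hrbdd
  obtain ⟨M, hM⟩ := Finite.exists_le C
  have hbdd (q : Fin J × ℕ) (ω : Ω) : |r q.1 q.2 ω| ≤ M := (hC q.1 q.2 ω).trans (hM q.1)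
  have hS : Measurable fun ω j => s j ω := measurable_pi_lambda _ hsmeas
  have hR : Measurable fun ω (q : Fin J × ℕ) => r q.1 q.2 ω :=
    measurable_pi_lambda _ fun q => hrmeas q.1 q.2
  have hint : Integrable (fun ω => distinctTupleSum b (s · ω) (fun q => r q.1 q.2 ω)) P :=
    (hdescint.mul_const _).mono'
      ((distinctTupleSum.measurable b).comp (hS.prodMk hR)).aestronglyMeasurable
      (ae_of_all _ fun ω => distinctTupleSum.abs_le b (hbdd · ω) _)
  refine (hsindep.integral_comp_eq_integral_integral hS hR
    (distinctTupleSum.measurable b).stronglyMeasurable hint).trans ?_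
  simp_rw [distinctTupleSum.integral_eq b hrindep (fun q => hrmeas q.1 q.2) hbdd
    (fun q => hrmean q.1 q.2)]
  rw [integral_mul_const,
    integral_map hS.aemeasurable (measurable_of_countable _).aestronglyMeasurable]

/-- **Multi-group falling-factorial lemma.** For each `j : Fin J` let `(r j k)` be an i.i.d.
sequence of bounded real random variables with mean `μ j`, the sequences for distinct `j`
being mutually independent, and let `(s j)` be `ℕ`-valued shot counts jointly independent of
all outcome sequences with `E[∏ j, (s j)⁻(b j)] < ∞` (falling factorial).  Writing `T j` for
the sum over all ordered `b j`-tuples of pairwise distinct indices in `{1,…,s j}` (realized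
as a sum over injections `Fin (b j) ↪ Fin (s j)`) of the product of the corresponding
outcomes, one has `E[∏ j, T j] = E[∏ j, (s j)⁻(b j)] * ∏ j, (μ j) ^ (b j)`. -/
theorem multigroup_falling_factorial
    {Ω : Type*} [MeasurableSpace Ω] (P : Measure Ω) [IsProbabilityMeasure P]
    (J : ℕ) (hJ : 1 ≤ J) (b : Fin J → ℕ) (μ : Fin J → ℝ)
    (r : Fin J → ℕ → Ω → ℝ) (s : Fin J → Ω → ℕ)
    (hrmeas : ∀ j k, Measurable (r j k))
    (hrbdd : ∀ j, ∃ C, ∀ k ω, |r j k ω| ≤ C)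
    (hrindep : iIndepFun
      (fun q : Fin J × ℕ => r q.1 q.2) P)
    (hrident : ∀ j k, IdentDistrib (r j k) (r j 0) P P)
    (hrmean : ∀ j k, ∫ ω, r j k ω ∂P = μ j)
    (hsmeas : ∀ j, Measurable (s j))
    (hsindep : IndepFun (fun ω => fun j => s j ω)
      (fun ω => fun q : Fin J × ℕ => r q.1 q.2 ω) P)
    (hdescint : Integrable
      (fun ω => ((∏ j, (s j ω).descFactorial (b j) : ℕ) : ℝ)) P) :
    ∫ ω, ∏ j, (∑ f : Fin (b j) ↪ Fin (s j ω), ∏ β, r j (f β : ℕ) ω) ∂P =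
      (∫ ω, ((∏ j, (s j ω).descFactorial (b j) : ℕ) : ℝ) ∂P) *
        ∏ j, (μ j) ^ (b j) :=
  multigroup_falling_factorial_general P J b μ r s hrmeas hrbdd hrindep hrmean hsmeas hsindep
    hdescint
end

section
/- (Unbiasedness of the inverse-binomial-sampling estimator of the negative log-likelihood, Appendix A.) Let 0 < p ≤ 1 and let K be an ℕ-valued random variable with the geometric distribution of the number of Bernoulli(p) trials up to and including the first success: P(K = n) = p(1−p)^{n−1} for every integer n ≥ 1. Define the estimator L̂ = Σ_{k=1}^{K−1} 1/k (so L̂ = 0 when K = 1). Then L̂ is integrable and E[L̂] = −log p. Equivalently, Σ_{n=1}^{∞} p(1−p)^{n−1} · H_{n−1} = −log p, where H_m = Σ_{k=1}^{m} 1/k is the m-th harmonic number (H_0 = 0). -/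
/-!
The generating function of the harmonic numbers is a Cauchy product:
`∑ₙ qⁿ Hₙ = (∑ⱼ qʲ) (∑ₖ q^(k+1)/(k+1)) = -log (1 - q) / (1 - q)`.
Under the geometric law `P(K = n + 1) = p qⁿ` with `q = 1 - p` the estimator is `H_{K-1}`, so its
expectation is `p · (-log p) / p = -log p`; the terms are nonnegative, so the same series also
gives integrability.
-/

open MeasureTheory ProbabilityTheory Finset

section DiscreteRandomVariable

variable {Ω X E : Type*} [MeasurableSpace Ω] [MeasurableSpace X] [Countable X]
  [MeasurableSingletonClass X] [NormedAddCommGroup E]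
  {P : Measure Ω} {K : Ω → X} {f : X → E}

theorem integrable_comp_of_summable_measureReal_preimage_mul_norm [IsFiniteMeasure P]
    (hK : Measurable K) (hf : Summable fun x => P.real (K ⁻¹' {x}) * ‖f x‖) :
    Integrable (fun ω => f (K ω)) P := by
  have hf_map : Integrable f (P.map K) := by
    rw [← Measure.sum_smul_dirac (P.map K)]
    refine integrable_sum_dirac (fun x => measure_ne_top _ _) ?_
    simpa [Measure.map_apply hK (measurableSet_singleton _), measureReal_def] using hf
  exact hf_map.comp_measurable hK

theorem integral_comp_eq_tsum_measureReal_preimage_smul [NormedSpace ℝ E] [CompleteSpace E]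
    (hK : Measurable K) (hf : Integrable (fun ω => f (K ω)) P) :
    ∫ ω, f (K ω) ∂P = ∑' x, P.real (K ⁻¹' {x}) • f x := by
  have hf_meas := (StronglyMeasurable.of_discrete (f := f)).aestronglyMeasurable (μ := P.map K)
  rw [← integral_map hK.aemeasurable hf_meas,
    integral_countable ((integrable_map_measure hf_meas hK.aemeasurable).mpr hf)]
  simp [map_measureReal_apply hK (measurableSet_singleton _)]

end DiscreteRandomVariable

theorem cast_harmonic (n : ℕ) : (harmonic n : ℝ) = ∑ k ∈ range n, (1 : ℝ) / (k + 1) := by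
  simp [harmonic]

theorem hasSum_pow_mul_harmonic {q : ℝ} (hq : |q| < 1) :
    HasSum (fun n => q ^ n * harmonic n) (-Real.log (1 - q) / (1 - q)) := by
  have hlog := Real.hasSum_pow_div_log_of_abs_lt_one hq
  have hlog_norm : Summable fun k : ℕ => ‖q ^ (k + 1) / (k + 1)‖ := by
    have := (Real.hasSum_pow_div_log_of_abs_lt_one (x := |q|) (by rwa [abs_abs])).summable
    refine this.congr fun k => ?_
    rw [norm_div, norm_pow, Real.norm_eq_abs, Real.norm_of_nonneg (by positivity)]
  have hgeom_norm : Summable fun j : ℕ => ‖q ^ j‖ := by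
    simpa using summable_geometric_of_lt_one (abs_nonneg q) hq
  have hprod := hasSum_sum_range_mul_of_summable_norm hlog_norm hgeom_norm
  rw [hlog.tsum_eq, tsum_geometric_of_abs_lt_one hq] at hprod
  have hterm : ∀ n : ℕ, ∑ k ∈ range (n + 1), q ^ (k + 1) / (k + 1) * q ^ (n - k) =
      q ^ (n + 1) * harmonic (n + 1) := by
    intro n
    rw [cast_harmonic, mul_sum]
    refine sum_congr rfl fun k hk => ?_
    rw [div_mul_eq_mul_div, ← pow_add, Nat.add_right_comm, Nat.add_sub_cancel' (by simpa
      [Nat.lt_succ_iff] using hk), mul_one_div]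
  rw [← hasSum_nat_add_iff' 1]
  simp only [sum_range_one, pow_zero, harmonic_zero, Rat.cast_zero, mul_zero, sub_zero]
  rw [div_eq_mul_inv]
  simpa only [hterm] using hprod

/-- **Unbiasedness of the inverse-binomial-sampling estimator of the negative
log-likelihood.** If `K` is geometrically distributed with `P(K = n) = p (1-p)^(n-1)` for
every `n ≥ 1` (the number of Bernoulli(`p`) trials up to and including the first success),
then the estimator `L̂ = ∑_{k=1}^{K-1} 1/k` (with `L̂ = 0` when `K = 1`) is integrable and
`E[L̂] = -log p`. -/
theorem ibs_estimator_unbiased_neg_log_likelihood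
    {Ω : Type*} [MeasurableSpace Ω] (P : Measure Ω) [IsProbabilityMeasure P]
    (p : ℝ) (hp0 : 0 < p) (hp1 : p ≤ 1)
    (K : Ω → ℕ) (hKmeas : Measurable K)
    (hgeom : ∀ n : ℕ, 1 ≤ n →
      P {ω | K ω = n} = ENNReal.ofReal (p * (1 - p) ^ (n - 1))) :
    Integrable (fun ω => ∑ k ∈ Finset.range (K ω - 1), (1 : ℝ) / (k + 1)) P ∧
      ∫ ω, ∑ k ∈ Finset.range (K ω - 1), (1 : ℝ) / (k + 1) ∂P = -Real.log p := by
  have hweight (m : ℕ) : P.real (K ⁻¹' {m + 1}) = p * (1 - p) ^ m := by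
    change (P {ω | K ω = m + 1}).toReal = _
    rw [hgeom (m + 1) (Nat.le_add_left 1 m), Nat.add_sub_cancel,
      ENNReal.toReal_ofReal (mul_nonneg hp0.le (pow_nonneg (by linarith) m))]
  have hsum : HasSum (fun n => P.real (K ⁻¹' {n}) * (harmonic (n - 1) : ℝ)) (-Real.log p) := by
    rw [← hasSum_nat_add_iff' 1]
    simp only [sum_range_one, Nat.zero_sub, harmonic_zero, Rat.cast_zero, mul_zero, sub_zero,
      Nat.add_sub_cancel, hweight, mul_assoc]
    have hq : |1 - p| < 1 := by rw [abs_of_nonneg (by linarith)]; linarith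
    simpa [mul_div_cancel₀ _ hp0.ne'] using (hasSum_pow_mul_harmonic hq).mul_left p
  simp only [← cast_harmonic]
  have hint := integrable_comp_of_summable_measureReal_preimage_mul_norm hKmeas
    (f := fun n => (harmonic (n - 1) : ℝ)) <| hsum.summable.congr fun n => by
      rw [Real.norm_of_nonneg (by rw [cast_harmonic]; positivity)]
  exact ⟨hint, (integral_comp_eq_tsum_measureReal_preimage_smul hKmeas hint).trans hsum.tsum_eq⟩
end
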